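/- Under the same setting as the triplet metric loss with bounded inputs ($\|x\| \le B$), the loss $\ell(w; x^+, \tilde x^+, x^-) = \phi(h_w(x^+, \tilde x^+) - h_w(x^+, x^-) + \zeta)$ with $\phi(u) = \log(1+e^{-u})$ is $64B^4$-smooth in $w$: $\|\nabla_w \ell(w) - \nabla_w \ell(w')\| \le 64 B^4 \|w - w'\|$ for all $w, w'$, where gradients and norms are with respect to the Frobenius structure on the matrix parameter space. -/

import Mathlib

/-! The gradient is `φ'(⟪w, D⟫ + ζ) • D` with the fixed direction
`D = (x⁺-x̃⁺)(x⁺-x̃⁺)ᵀ - (x⁺-x⁻)(x⁺-x⁻)ᵀ`. Since `φ'(u) = -(1 + eᵘ)⁻¹` is 1-Lipschitz and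
`w ↦ ⟪w, D⟫` is `‖D‖`-Lipschitz, the gradient is `‖D‖²`-Lipschitz, and the Frobenius norm of
an outer product `v vᵀ` is `‖v‖²`, so `‖D‖ ≤ (2B)² + (2B)² = 8B²`. -/

open scoped RealInnerProductSpace

/-- The outer product `(x - x')(x - x')ᵀ` viewed as an element of the Euclidean
(Frobenius) space `ℝ^{d×d}`. -/
noncomputable def outerDiff {d : ℕ} (x x' : EuclideanSpace ℝ (Fin d)) :
    EuclideanSpace ℝ (Fin d × Fin d) :=
  (WithLp.equiv 2 _).symm fun p => (x p.1 - x' p.1) * (x p.2 - x' p.2)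

/-- The bilinear model `h_w(x,x') = ⟪w, (x-x')(x-x')ᵀ⟫`. -/
noncomputable def hModel {d : ℕ} (w : EuclideanSpace ℝ (Fin d × Fin d))
    (x x' : EuclideanSpace ℝ (Fin d)) : ℝ :=
  ⟪w, outerDiff x x'⟫

open Real

theorem hasDerivAt_log_one_add_exp_neg (u : ℝ) :
    HasDerivAt (fun u => log (1 + exp (-u))) (-(1 + exp u)⁻¹) u := by
  have hinner : HasDerivAt (fun u => 1 + exp (-u)) (exp (-u) * (-1)) u :=
    ((hasDerivAt_exp (-u)).comp u (hasDerivAt_neg u)).const_add 1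
  refine (hinner.log (by positivity)).congr_deriv ?_
  rw [exp_neg]
  field_simp
  ring

theorem lipschitzWith_one_neg_inv_one_add_exp : LipschitzWith 1 fun u => -(1 + exp u)⁻¹ := by
  have hderiv (u : ℝ) :
      HasDerivAt (fun u => -(1 + exp u)⁻¹) (exp u / (1 + exp u) ^ 2) u :=
    (((hasDerivAt_exp u).const_add 1).fun_inv (by positivity)).fun_neg.congr_deriv (by ring)
  refine lipschitzWith_of_nnnorm_deriv_le (fun u => (hderiv u).differentiableAt) fun u => ?_
  rw [(hderiv u).deriv, ← NNReal.coe_le_coe, coe_nnnorm, NNReal.coe_one,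
    Real.norm_of_nonneg (by positivity), div_le_one (by positivity)]
  nlinarith [exp_pos u]

theorem norm_euclideanSpace_outer {ι κ : Type*} [Fintype ι] [Fintype κ]
    (u : EuclideanSpace ℝ ι) (v : EuclideanSpace ℝ κ) :
    ‖(WithLp.equiv 2 _).symm fun p : ι × κ => u p.1 * v p.2‖ = ‖u‖ * ‖v‖ := by
  rw [EuclideanSpace.norm_eq, EuclideanSpace.norm_eq, EuclideanSpace.norm_eq,
    ← Real.sqrt_mul (by positivity), Finset.sum_mul_sum, ← Finset.sum_product']
  simp [mul_pow]

theorem norm_outerDiff {d : ℕ} (x x' : EuclideanSpace ℝ (Fin d)) :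
    ‖outerDiff x x'‖ = ‖x - x'‖ ^ 2 := by
  rw [sq, ← norm_euclideanSpace_outer]
  rfl

theorem hModel_sub_hModel {d : ℕ} (w : EuclideanSpace ℝ (Fin d × Fin d))
    (x y z : EuclideanSpace ℝ (Fin d)) :
    hModel w x y - hModel w x z = ⟪w, outerDiff x y - outerDiff x z⟫ :=
  (inner_sub_right w _ _).symm

theorem LipschitzWith.smul_inner_add {E : Type*} [NormedAddCommGroup E] [InnerProductSpace ℝ E]
    {g : ℝ → ℝ} {K : NNReal} (hg : LipschitzWith K g) (D : E) (c : ℝ) :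
    LipschitzWith (K * ‖D‖₊ ^ 2) fun w => g (⟪w, D⟫ + c) • D := by
  have hinner : LipschitzWith ‖D‖₊ fun w : E => ⟪w, D⟫ + c :=
    LipschitzWith.of_dist_le_mul fun w w' => by
      rw [dist_eq_norm, dist_eq_norm, add_sub_add_right_eq_sub, ← inner_sub_left,
        Real.norm_eq_abs, coe_nnnorm, mul_comm]
      exact abs_real_inner_le_norm _ _
  have hsmul : LipschitzWith ‖D‖₊ fun t : ℝ => t • D :=
    LipschitzWith.of_dist_le_mul fun s t => by
      rw [dist_eq_norm, dist_eq_norm, ← sub_smul, norm_smul, coe_nnnorm, mul_comm]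
  have := (hsmul.comp hg).comp hinner
  rwa [mul_right_comm, ← sq, mul_comm] at this

/-- The logistic triplet metric loss is `64B⁴`-smooth in the matrix parameter:
its gradient `φ'(h_w(x⁺,x̃⁺) - h_w(x⁺,x⁻) + ζ) • ((x⁺-x̃⁺)(x⁺-x̃⁺)ᵀ - (x⁺-x⁻)(x⁺-x⁻)ᵀ)`
is `64B⁴`-Lipschitz. -/
theorem triplet_metric_loss_smooth {d : ℕ} (X : Set (EuclideanSpace ℝ (Fin d)))
    (B : ℝ) (hB : ∀ x ∈ X, ‖x‖ ≤ B) (ζ : ℝ)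
    (φ : ℝ → ℝ) (hφ : ∀ u, φ u = Real.log (1 + Real.exp (-u))) :
    ∀ w w' : EuclideanSpace ℝ (Fin d × Fin d),
      ∀ xp ∈ X, ∀ xq ∈ X, ∀ xm ∈ X,
        ‖(deriv φ (hModel w xp xq - hModel w xp xm + ζ)) •
            (outerDiff xp xq - outerDiff xp xm) -
          (deriv φ (hModel w' xp xq - hModel w' xp xm + ζ)) •
            (outerDiff xp xq - outerDiff xp xm)‖ ≤ 64 * B ^ 4 * ‖w - w'‖ := by
  intro w w' xp hxp xq hxq xm hxm
  have hderiv : deriv φ = fun u => -(1 + exp u)⁻¹ := by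
    rw [funext hφ]
    exact funext fun u => (hasDerivAt_log_one_add_exp_neg u).deriv
  have hdiff {y} (hy : y ∈ X) : ‖xp - y‖ ≤ 2 * B := by
    linarith [norm_sub_le xp y, hB xp hxp, hB y hy]
  set D := outerDiff xp xq - outerDiff xp xm
  have hD : ‖D‖ ≤ 8 * B ^ 2 := calc
    ‖D‖ ≤ ‖xp - xq‖ ^ 2 + ‖xp - xm‖ ^ 2 := by
      simpa only [norm_outerDiff] using norm_sub_le (outerDiff xp xq) (outerDiff xp xm)
    _ ≤ (2 * B) ^ 2 + (2 * B) ^ 2 := by gcongr <;> exact hdiff ‹_›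
    _ = 8 * B ^ 2 := by ring
  have hlip := (lipschitzWith_one_neg_inv_one_add_exp.smul_inner_add D ζ).dist_le_mul w w'
  simp only [dist_eq_norm, NNReal.coe_pow, coe_nnnorm, one_mul] at hlip
  simp only [hModel_sub_hModel, hderiv]
  calc _ ≤ ‖D‖ ^ 2 * ‖w - w'‖ := hlip
    _ ≤ (8 * B ^ 2) ^ 2 * ‖w - w'‖ := by gcongr
    _ = 64 * B ^ 4 * ‖w - w'‖ := by ring
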